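/- arXiv:2505.12755 — 8 statements merged into one kernel-verified Lean document; each statement's English description precedes it below -/
import Mathlib

section
/- Let A, B ∈ M_n(ℂ), and let A = S + N be a Jordan–Chevalley decomposition of A (S diagonalizable, N nilpotent, SN = NS). If [A,[A,B]] = 0, then [S, B] = 0. -/
/-!
`ad A = ad S + ad N` is a decomposition of `ad A` into a semisimple part `ad S` (semisimple
because `S` is) and a commuting nilpotent part `ad N`. The hypothesis `[A,[A,B]] = 0` places `B`
in the generalized `0`-eigenspace of `ad A`, on which the semisimple part `ad S` must act by `0`.
-/

/-- A complex square matrix is diagonalizable (semisimple) if it is conjugate to a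
diagonal matrix. -/
def Matrix.IsDiagonalizable {n : ℕ} (A : Matrix (Fin n) (Fin n) ℂ) : Prop :=
  ∃ P : Matrix (Fin n) (Fin n) ℂ, IsUnit P ∧ (P * A * P⁻¹).IsDiag

open Polynomial Module.End LieAlgebra Matrix

section

attribute [local instance 100] LieRing.ofAssociativeRing

theorem Module.End.IsSemisimple.lie_eq_zero_of_mem_maxGenEigenspace_ad_add {K V : Type*}
    [Field K] [PerfectField K] [AddCommGroup V] [Module K V] [FiniteDimensional K V]
    {s n b : Module.End K V} (hs : s.IsSemisimple) (hn : IsNilpotent n) (hsn : Commute s n)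
    (hb : b ∈ (ad K _ (s + n)).maxGenEigenspace 0) : ⁅s, b⁆ = 0 := by
  have h := apply_eq_of_mem_of_comm_of_isFinitelySemisimple_of_isNil hb
    (commute_ad_of_commute ((Commute.refl s).add_left hsn.symm))
    (ad_isSemisimple_of_isSemisimple hs).isFinitelySemisimple
    (by simpa only [map_add, add_sub_cancel_left] using ad_nilpotent_of_nilpotent (R := K) hn)
  simpa using h

theorem Matrix.IsDiag.isSemisimple_toLin' {ι K : Type*} [Field K] [Fintype ι] [DecidableEq ι]
    {D : Matrix ι ι K} (hD : D.IsDiag) : IsSemisimple (toLin' D) := by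
  classical
  set p := ∏ x ∈ Finset.univ.image D.diag, (X - C x)
  have hp : Squarefree p := (separable_prod_X_sub_C_iff'.mpr fun _ _ _ _ h => h).squarefree
  have hroot (j : ι) : aeval (D.diag j) p = 0 := by
    rw [coe_aeval_eq_eval, eval_prod]
    exact Finset.prod_eq_zero (Finset.mem_image_of_mem _ (Finset.mem_univ j)) (by simp)
  have hD_root : aeval D p = 0 := by
    rw [← hD.diagonal_diag, ← diagonalAlgHom_apply (R := K), aeval_algHom_apply, aeval_pi_apply]
    simp only [hroot]
    exact map_zero _
  refine isSemisimple_of_squarefree_aeval_eq_zero hp ?_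
  rw [show toLin' D = toLinAlgEquiv' D from rfl, aeval_algEquiv, AlgHom.comp_apply, hD_root,
    map_zero]

theorem Matrix.isSemisimple_toLin'_conj_iff {ι K : Type*} [Field K] [Fintype ι] [DecidableEq ι]
    {P : Matrix ι ι K} (hP : IsUnit P) (S : Matrix ι ι K) :
    IsSemisimple (toLin' (P * S * P⁻¹)) ↔ IsSemisimple (toLin' S) := by
  have hPd := (isUnit_iff_isUnit_det P).mp hP
  refine (LinearEquiv.isSemisimple_iff _ _
    (toLin'OfInv (nonsing_inv_mul P hPd) (mul_nonsing_inv P hPd)) ?_).symm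
  change toLin' P ∘ₗ toLin' S = toLin' (P * S * P⁻¹) ∘ₗ toLin' P
  rw [← toLin'_mul, ← toLin'_mul, Matrix.mul_assoc _ P⁻¹, nonsing_inv_mul P hPd, Matrix.mul_one]

theorem Matrix.IsDiagonalizable.isSemisimple_toLin' {n : ℕ} {S : Matrix (Fin n) (Fin n) ℂ}
    (hS : S.IsDiagonalizable) : IsSemisimple (toLin' S) := by
  obtain ⟨P, hP, hdiag⟩ := hS
  exact (isSemisimple_toLin'_conj_iff hP S).mp hdiag.isSemisimple_toLin'

theorem Matrix.IsDiagonalizable.lie_eq_zero_of_lie_lie_add_eq_zero {n : ℕ}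
    {S N B : Matrix (Fin n) (Fin n) ℂ} (hS : S.IsDiagonalizable) (hN : IsNilpotent N)
    (hSN : Commute S N) (h : ⁅S + N, ⁅S + N, B⁆⁆ = 0) : ⁅S, B⁆ = 0 := by
  let e := toLinAlgEquiv' (R := ℂ) (n := Fin n)
  have map_lie (X Y : Matrix (Fin n) (Fin n) ℂ) : e ⁅X, Y⁆ = ⁅e X, e Y⁆ :=
    e.toLieEquiv.map_lie X Y
  have hB : e B ∈ (ad ℂ _ (e S + e N)).maxGenEigenspace 0 := by
    refine (mem_maxGenEigenspace _ _ _).mpr ⟨2, ?_⟩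
    simp only [zero_smul, sub_zero, pow_two, Module.End.mul_apply, ad_apply, ← map_add, ← map_lie,
      h, map_zero]
  refine (map_eq_zero_iff e e.injective).mp ?_
  rw [map_lie]
  exact hS.isSemisimple_toLin'.lie_eq_zero_of_mem_maxGenEigenspace_ad_add (hN.map e)
    (hSN.map e) hB

end

/-- If `A = S + N` is a Jordan–Chevalley decomposition of `A` and `[A,[A,B]] = 0`,
then `[S, B] = 0`. -/
theorem lie_semisimplePart_eq_zero_of_lie_lie_eq_zero {n : ℕ}
    (A B S N : Matrix (Fin n) (Fin n) ℂ)
    (hA : A = S + N) (hS : S.IsDiagonalizable) (hN : IsNilpotent N)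
    (hSN : S * N = N * S) (h : ⁅A, ⁅A, B⁆⁆ = 0) :
    ⁅S, B⁆ = 0 := by
  subst hA
  exact hS.lie_eq_zero_of_lie_lie_add_eq_zero hN hSN h
end

section
/- Let 𝔫 be a finite-dimensional nilpotent Lie algebra over ℂ and let ρ : 𝔫 → M_n(ℂ) be a Lie algebra homomorphism (a representation of 𝔫, where M_n(ℂ) carries the commutator bracket). Let x, y ∈ 𝔫 and let ρ(x) = S + N be a Jordan–Chevalley decomposition of ρ(x) (S diagonalizable, N nilpotent, SN = NS). Then S commutes with ρ(y): [S, ρ(y)] = 0. -/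
attribute [local instance 100] LieRing.ofAssociativeRing

open Polynomial

theorem Matrix.exists_squarefree_aeval_diagonal_eq_zero {K ι : Type*} [Field K] [Fintype ι]
    [DecidableEq ι] (d : ι → K) :
    ∃ p : K[X], Squarefree p ∧ aeval (diagonal d) p = 0 := by
  classical
  refine ⟨∏ μ ∈ Finset.univ.image d, (X - C μ),
    (separable_prod_X_sub_C_iff'.mpr fun _ _ _ _ h ↦ h).squarefree, ?_⟩
  rw [← diagonalAlgHom_apply K, aeval_algHom_apply, aeval_pi_apply, diagonalAlgHom_apply,
    diagonal_eq_zero]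
  funext i
  simpa [eval_prod] using Finset.prod_eq_zero (Finset.mem_image_of_mem d (Finset.mem_univ i))
    (sub_self (d i))

theorem Matrix.IsDiagonalizable.exists_squarefree_aeval_eq_zero {n : ℕ}
    {S : Matrix (Fin n) (Fin n) ℂ} (hS : S.IsDiagonalizable) :
    ∃ p : ℂ[X], Squarefree p ∧ aeval S p = 0 := by
  obtain ⟨P, hP, hD⟩ := hS
  obtain ⟨p, hp, hDp⟩ := exists_squarefree_aeval_diagonal_eq_zero (P * S * P⁻¹).diag
  refine ⟨p, hp, ?_⟩
  have hconj : ConjAct.toConjAct hP.unit • S = P * S * P⁻¹ := by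
    rw [ConjAct.units_smul_def, ConjAct.ofConjAct_toConjAct, coe_units_inv, IsUnit.unit_spec]
  rwa [hD.diagonal_diag, ← hconj, aeval_smul, smul_eq_zero_iff_eq] at hDp

theorem LieAlgebra.isSemisimple_ad_of_squarefree_aeval_eq_zero {K A : Type*} [Field K]
    [PerfectField K] [Ring A] [Algebra K A] [FiniteDimensional K A] {a : A} {p : K[X]}
    (hp : Squarefree p) (ha : aeval a p = 0) : (ad K A a).IsSemisimple := by
  rw [ad_eq_lmul_left_sub_lmul_right]
  have hl : Module.End.IsSemisimple (LinearMap.mulLeft K a) := by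
    refine Module.End.isSemisimple_of_squarefree_aeval_eq_zero hp ?_
    rw [show LinearMap.mulLeft K a = Algebra.lmul K A a from rfl, aeval_algHom_apply, ha,
      map_zero]
  have hr : Module.End.IsSemisimple (LinearMap.mulRight K a) := by
    refine Module.End.isSemisimple_of_squarefree_aeval_eq_zero hp ?_
    have hrw : LinearMap.mulRight K a = Algebra.lsmul K K A (MulOpposite.op a) := by
      ext; simp [Algebra.lsmul]
    rw [hrw, aeval_algHom_apply, aeval_op_apply, ha, MulOpposite.op_zero, map_zero]
  exact hl.sub_of_commute (LinearMap.commute_mulLeft_right a a) hr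

theorem LieHom.ad_pow_apply {R L L' : Type*} [CommRing R] [LieRing L] [LieAlgebra R L]
    [LieRing L'] [LieAlgebra R L'] (f : L →ₗ⁅R⁆ L') (x y : L) (k : ℕ) :
    (LieAlgebra.ad R L' (f x) ^ k) (f y) = f ((LieAlgebra.ad R L x ^ k) y) := by
  have := Module.End.commute_pow_left_of_commute (f := (f : L →ₗ[R] L'))
    (g := LieAlgebra.ad R L x) (g₂ := LieAlgebra.ad R L' (f x)) (by ext; simp) k
  exact LinearMap.congr_fun this y

theorem Module.End.IsSemisimple.apply_eq_zero_of_pow_add_apply_eq_zero {K M : Type*} [Field K]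
    [AddCommGroup M] [Module K M] {s n : Module.End K M} (hs : s.IsSemisimple)
    (hn : IsNilpotent n) (hsn : Commute s n) {k : ℕ} {v : M} (hv : ((s + n) ^ k) v = 0) :
    s v = 0 := by
  set W := LinearMap.ker ((s + n) ^ k)
  have hW (g : Module.End K M) (hg : Commute (s + n) g) : ∀ w ∈ W, g w ∈ W := fun w hw ↦ by
    rw [LinearMap.mem_ker, ← Module.End.mul_apply, (hg.pow_left k).eq,
      Module.End.mul_apply, LinearMap.mem_ker.mp hw, map_zero]
  have hfn : Commute (s + n) n := hsn.add_left (Commute.refl n)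
  have hWs := hW s ((Commute.refl s).add_left hsn.symm)
  have hWn := hW n hfn
  have hWf := hW (s + n) (Commute.refl _)
  have hf_nil : IsNilpotent ((s + n).restrict hWf) := ⟨k, by
    ext ⟨w, hw⟩
    rw [Module.End.pow_restrict, LinearMap.coe_restrict_apply]
    exact hw⟩
  have hs_nil : IsNilpotent (s.restrict hWs) := by
    have hsub : s.restrict hWs = (s + n).restrict hWf - n.restrict hWn := by
      ext; simp [LinearMap.coe_restrict_apply]
    rw [hsub]
    exact (LinearMap.restrict_commute hfn hWf hWn).isNilpotent_sub hf_nil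
      (Module.End.isNilpotent.restrict hWn hn)
  have hs_zero := Module.End.eq_zero_of_isNilpotent_isSemisimple hs_nil (hs.restrict hWs)
  simpa [LinearMap.coe_restrict_apply] using
    congr_arg Subtype.val (LinearMap.congr_fun hs_zero ⟨v, hv⟩)

theorem semisimplePart_lie_apply_eq_zero_general {L : Type*} [LieRing L] [LieAlgebra ℂ L]
    [LieRing.IsNilpotent L] {n : ℕ}
    (ρ : L →ₗ⁅ℂ⁆ Matrix (Fin n) (Fin n) ℂ) (x y : L)
    (S N : Matrix (Fin n) (Fin n) ℂ) (hx : ρ x = S + N)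
    (hS : S.IsDiagonalizable) (hN : IsNilpotent N) (hSN : S * N = N * S) :
    ⁅S, ρ y⁆ = 0 := by
  obtain ⟨p, hp, hSp⟩ := hS.exists_squarefree_aeval_eq_zero
  obtain ⟨k, hk⟩ := LieAlgebra.nilpotent_ad_of_nilpotent_algebra ℂ L
  refine (LieAlgebra.isSemisimple_ad_of_squarefree_aeval_eq_zero hp hSp)
    |>.apply_eq_zero_of_pow_add_apply_eq_zero (LieAlgebra.ad_nilpotent_of_nilpotent hN)
      (LieAlgebra.commute_ad_of_commute hSN) (k := k) ?_
  rw [← map_add, ← hx, ρ.ad_pow_apply, hk, LinearMap.zero_apply, map_zero]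

/-- Let `ρ` be a matrix representation of a finite-dimensional nilpotent complex Lie
algebra `𝔫`, and let `ρ x = S + N` be a Jordan–Chevalley decomposition.  Then
`[S, ρ y] = 0` for every `y ∈ 𝔫`. -/
theorem semisimplePart_lie_apply_eq_zero {L : Type*} [LieRing L] [LieAlgebra ℂ L]
    [FiniteDimensional ℂ L] [LieRing.IsNilpotent L] {n : ℕ}
    (ρ : L →ₗ⁅ℂ⁆ Matrix (Fin n) (Fin n) ℂ) (x y : L)
    (S N : Matrix (Fin n) (Fin n) ℂ) (hx : ρ x = S + N)
    (hS : S.IsDiagonalizable) (hN : IsNilpotent N) (hSN : S * N = N * S) :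
    ⁅S, ρ y⁆ = 0 :=
  semisimplePart_lie_apply_eq_zero_general ρ x y S N hx hS hN hSN
end

section
/- Let 𝔫 be a finite-dimensional nilpotent Lie algebra over ℂ and let ρ : 𝔫 → M_n(ℂ) be a Lie algebra homomorphism. Let x, y ∈ 𝔫, and let ρ(x) = S_x + N_x and ρ(y) = S_y + N_y be Jordan–Chevalley decompositions. Then S_x + S_y is the semisimple part of ρ(x+y); that is, S_x + S_y is diagonalizable, commutes with ρ(x+y), and ρ(x+y) − (S_x + S_y) is nilpotent. -/
open Module

open Polynomial in
lemma Module.End.isSemisimple_of_basis_hasEigenvector {K V ι : Type*} [Field K] [AddCommGroup V]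
    [Module K V] [Fintype ι] {f : End K V} (b : Basis ι K V) {d : ι → K}
    (h : ∀ i, f.HasEigenvector (d i) (b i)) : f.IsSemisimple := by
  classical
  refine isSemisimple_of_squarefree_aeval_eq_zero
    (p := ∏ μ ∈ Finset.univ.image d, (X - C μ)) ?_ (b.ext fun i => ?_)
  · exact (separable_prod_X_sub_C_iff'.mpr fun _ _ _ _ => id).squarefree
  · rw [aeval_apply_of_hasEigenvector (h i), eval_prod,
      Finset.prod_eq_zero (Finset.mem_image_of_mem d (Finset.mem_univ i)) (by simp)]
    simp

namespace Matrix

variable {n : ℕ}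

lemma isDiagonalizable_of_mulVec_eq_smul {A : Matrix (Fin n) (Fin n) ℂ}
    (b : Basis (Fin n) ℂ (Fin n → ℂ)) (d : Fin n → ℂ) (h : ∀ i, A *ᵥ b i = d i • b i) :
    A.IsDiagonalizable := by
  have hA : toLin' A = toLin b b (diagonal d) := b.ext fun i => by
    rw [toLin'_apply, h, toLin_self]
    simp [diagonal_apply]
  set std := Pi.basisFun ℂ (Fin n)
  have hconj : std.toMatrix b * diagonal d * b.toMatrix std = A := by
    have := basis_toMatrix_mul_linearMap_toMatrix_mul_basis_toMatrix std b std b (toLin' A)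
    rwa [LinearMap.toMatrix_eq_toMatrix', LinearMap.toMatrix'_toLin', hA,
      LinearMap.toMatrix_toLin] at this
  have hinv : b.toMatrix std * std.toMatrix b = 1 := b.toMatrix_mul_toMatrix_flip std
  refine ⟨b.toMatrix std, .of_mul_eq_one _ hinv, ?_⟩
  rw [inv_eq_right_inv hinv, ← hconj]
  simp only [← Matrix.mul_assoc, hinv, Matrix.one_mul]
  rw [Matrix.mul_assoc, hinv, Matrix.mul_one]
  exact isDiag_diagonal d

theorem isDiagonalizable_iff_isSemisimple_toLin' {A : Matrix (Fin n) (Fin n) ℂ} :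
    A.IsDiagonalizable ↔ End.IsSemisimple (toLin' A) := by
  constructor
  · rintro ⟨P, hP, hD⟩
    let hPinv := hP.invertible
    have hconj : toLin' P ∘ₗ toLin' A = toLin' (P * A * P⁻¹) ∘ₗ toLin' P := by
      rw [← toLin'_mul, ← toLin'_mul, Matrix.mul_assoc _ P⁻¹, inv_mul_of_invertible,
        Matrix.mul_one]
    rw [LinearEquiv.isSemisimple_iff _ _ (toLinearEquiv' P hPinv) hconj, ← hD.diagonal_diag]
    exact End.isSemisimple_of_basis_hasEigenvector _ (hasEigenvector_toLin'_diagonal _)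
  · intro hA
    classical
    set f : End ℂ (Fin n → ℂ) := toLin' A
    have hint := DirectSum.isInternal_submodule_of_iSupIndep_of_iSup_eq_top
      f.eigenspaces_iSupIndep hA.iSup_eigenspace_eq_top
    let b := hint.collectedBasis fun μ => finBasis ℂ (f.eigenspace μ)
    let e := b.indexEquiv (Pi.basisFun ℂ (Fin n))
    refine isDiagonalizable_of_mulVec_eq_smul (b.reindex e) (fun i => (e.symm i).1) fun i => ?_
    rw [← toLin'_apply, b.reindex_apply]
    exact End.mem_eigenspace_iff.mp (hint.collectedBasis_mem _ _)

end Matrix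

namespace LieModule

variable {K L M : Type*} [Field K] [LieRing L] [LieAlgebra K L] [AddCommGroup M] [Module K M]
  [LieRingModule L M] [LieModule K L M] [LieRing.IsNilpotent L]

lemma apply_eq_smul_of_mem_genWeightSpace {χ : L → K} {z : L} {s n : End K M}
    (hz : toEnd K L M z = s + n) (hs : s.IsFinitelySemisimple) (hn : _root_.IsNilpotent n)
    (hsn : Commute s n) {m : M} (hm : m ∈ genWeightSpace M χ) :
    s m = χ z • m :=
  End.apply_eq_of_mem_of_comm_of_isFinitelySemisimple_of_isNil
    (genWeightSpace_le_genWeightSpaceOf M z χ hm) (hz ▸ (Commute.refl s).add_left hsn.symm) hs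
    (by rwa [hz, add_sub_cancel_left])

variable [FiniteDimensional K M] [IsTriangularizable K L M]

lemma ext_genWeightSpace {f g : End K M}
    (h : ∀ χ : Weight K L M, ∀ m ∈ genWeightSpace M χ, f m = g m) : f = g := by
  refine LinearMap.ext_on (s := ⋃ χ : Weight K L M, (genWeightSpace M χ : Set M)) ?_ ?_
  · rw [Submodule.span_iUnion]
    have := congr_arg LieSubmodule.toSubmodule (iSup_genWeightSpace_eq_top' K L M)
    rw [LieSubmodule.iSup_toSubmodule, LieSubmodule.top_toSubmodule] at this
    simpa only [← LieSubmodule.coe_toSubmodule, Submodule.span_eq] using this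
  · rintro m ⟨-, ⟨χ, rfl⟩, hm⟩
    exact h χ m hm

theorem semisimplePart_add [CharZero K] {x y : L} {sx nx sy ny : End K M}
    (hx : toEnd K L M x = sx + nx) (hsx : sx.IsSemisimple) (hnx : _root_.IsNilpotent nx)
    (hsnx : Commute sx nx)
    (hy : toEnd K L M y = sy + ny) (hsy : sy.IsSemisimple) (hny : _root_.IsNilpotent ny)
    (hsny : Commute sy ny) :
    (sx + sy).IsSemisimple ∧ Commute (sx + sy) (toEnd K L M (x + y)) ∧
      _root_.IsNilpotent (toEnd K L M (x + y) - (sx + sy)) := by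
  obtain ⟨n, hn, s, hs, hn_nil, hs_ss, hxy⟩ :=
    (toEnd K L M (x + y)).exists_isNilpotent_isSemisimple
  have hsn : Commute s n := Algebra.commute_of_mem_adjoin_singleton_of_commute hn
    (Algebra.commute_of_mem_adjoin_self hs).symm
  -- `← map_add` is the linearity of the weights, available as `L` is nilpotent and `K` has
  -- characteristic zero.
  have hs_eq : sx + sy = s := ext_genWeightSpace fun χ m hm => by
    rw [LinearMap.add_apply,
      apply_eq_smul_of_mem_genWeightSpace hx hsx.isFinitelySemisimple hnx hsnx hm,
      apply_eq_smul_of_mem_genWeightSpace hy hsy.isFinitelySemisimple hny hsny hm, ← add_smul,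
      ← map_add, apply_eq_smul_of_mem_genWeightSpace (hxy.trans (add_comm n s))
        hs_ss.isFinitelySemisimple hn_nil hsn hm]
  subst hs_eq
  refine ⟨hs_ss, ?_, ?_⟩
  · rw [hxy]
    exact hsn.add_right (Commute.refl _)
  · rwa [hxy, add_sub_cancel_right]

end LieModule

attribute [local instance 100] LieRing.ofAssociativeRing

/-- Let `ρ` be a matrix representation of a finite-dimensional nilpotent complex Lie
algebra `𝔫`, and let `ρ x = Sx + Nx`, `ρ y = Sy + Ny` be Jordan–Chevalley
decompositions.  Then `Sx + Sy` is the semisimple part of `ρ (x + y)`: it is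
diagonalizable, commutes with `ρ (x + y)`, and `ρ (x + y) - (Sx + Sy)` is nilpotent. -/
theorem semisimplePart_add {L : Type*} [LieRing L] [LieAlgebra ℂ L]
    [LieRing.IsNilpotent L] {n : ℕ}
    (ρ : L →ₗ⁅ℂ⁆ Matrix (Fin n) (Fin n) ℂ) (x y : L)
    (Sx Nx Sy Ny : Matrix (Fin n) (Fin n) ℂ)
    (hx : ρ x = Sx + Nx) (hSx : Sx.IsDiagonalizable) (hNx : IsNilpotent Nx)
    (hSNx : Sx * Nx = Nx * Sx)
    (hy : ρ y = Sy + Ny) (hSy : Sy.IsDiagonalizable) (hNy : IsNilpotent Ny)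
    (hSNy : Sy * Ny = Ny * Sy) :
    (Sx + Sy).IsDiagonalizable ∧
      (Sx + Sy) * ρ (x + y) = ρ (x + y) * (Sx + Sy) ∧
      IsNilpotent (ρ (x + y) - (Sx + Sy)) := by
  let φ : Matrix (Fin n) (Fin n) ℂ ≃ₐ[ℂ] End ℂ (Fin n → ℂ) := Matrix.toLinAlgEquiv'
  let _ : LieRingModule L (Fin n → ℂ) := LieRingModule.compLieHom _ (φ.toAlgHom.toLieHom.comp ρ)
  let _ : LieModule ℂ L (Fin n → ℂ) := LieModule.compLieHom _ _
  have htoEnd (z : L) : LieModule.toEnd ℂ L (Fin n → ℂ) z = φ (ρ z) := rfl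
  obtain ⟨hss, hcomm, hnil⟩ := LieModule.semisimplePart_add (sx := φ Sx) (sy := φ Sy)
    (by rw [htoEnd, hx, map_add]) (Matrix.isDiagonalizable_iff_isSemisimple_toLin'.mp hSx)
    (hNx.map φ) (Commute.map hSNx φ)
    (by rw [htoEnd, hy, map_add]) (Matrix.isDiagonalizable_iff_isSemisimple_toLin'.mp hSy)
    (hNy.map φ) (Commute.map hSNy φ)
  rw [← map_add] at hss hcomm hnil
  rw [htoEnd, ← map_sub] at hnil
  rw [htoEnd] at hcomm
  exact ⟨Matrix.isDiagonalizable_iff_isSemisimple_toLin'.mpr hss,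
    by simpa only [AlgEquiv.symm_apply_apply] using (hcomm.map φ.symm).eq,
    (IsNilpotent.map_iff φ.injective).mp hnil⟩
end

section
/- Let 𝔫 be a finite-dimensional nilpotent Lie algebra over ℂ, let ρ : 𝔫 → M_n(ℂ) be a Lie algebra homomorphism, and let s : 𝔫 → M_n(ℂ) be the map assigning to each x ∈ 𝔫 the semisimple part of ρ(x) (i.e., for every x, s(x) is diagonalizable, s(x) commutes with ρ(x), and ρ(x) − s(x) is nilpotent). Then there exists an invertible matrix g ∈ GL_n(ℂ) such that g · s(x) · g^{-1} is a diagonal matrix for every x ∈ 𝔫 (the image of s is simultaneously diagonalizable). -/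
/-!
Through `ρ`, the space `ℂⁿ` is a module over the nilpotent Lie algebra `L`, and it is the direct
sum of its generalized weight spaces. On the weight space of a weight `χ`, the operator
`s x - χ x` is semisimple (a restriction of the semisimple `s x`) and nilpotent (the difference of
the commuting nilpotent operators `ρ x - χ x` and `ρ x - s x`), hence zero. So each `s x` acts
on that weight space as the scalar `χ x`, and any basis adapted to the weight-space decomposition
diagonalizes all the `s x` at once.
-/

open Module Polynomial Matrix

theorem Matrix.isSemisimple_toLin'_diagonal {K ι : Type*} [Field K] [Fintype ι] [DecidableEq ι]
    (d : ι → K) : End.IsSemisimple (toLin' (diagonal d)) := by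
  classical
  refine End.isSemisimple_of_squarefree_aeval_eq_zero (p := ∏ c ∈ Finset.univ.image d, (X - C c))
    (separable_prod_X_sub_C_iff'.mpr fun _ _ _ _ ↦ id).squarefree
    ((Pi.basisFun K ι).ext fun i ↦ ?_)
  rw [End.aeval_apply_of_hasEigenvector (hasEigenvector_toLin'_diagonal d i), eval_prod,
    Finset.prod_eq_zero (Finset.mem_image_of_mem d (Finset.mem_univ i)) (by simp), zero_smul,
    LinearMap.zero_apply]

theorem Matrix.IsDiagonalizable.isSemisimple_toLin'_s7 {n : ℕ} {A : Matrix (Fin n) (Fin n) ℂ}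
    (hA : A.IsDiagonalizable) : End.IsSemisimple (toLin' A) := by
  obtain ⟨P, hP, hD⟩ := hA
  rw [P.isUnit_iff_isUnit_det] at hP
  have hconj : toLin' P ∘ₗ toLin' A = toLin' (P * A * P⁻¹) ∘ₗ toLin' P := by
    rw [← toLin'_mul, ← toLin'_mul, Matrix.mul_assoc _ P⁻¹, P.nonsing_inv_mul hP, Matrix.mul_one]
  exact (LinearEquiv.isSemisimple_iff _ _ (toLin'OfInv (P.nonsing_inv_mul hP)
    (P.mul_nonsing_inv hP)) hconj).mpr (hD.diagonal_diag ▸ isSemisimple_toLin'_diagonal _)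

theorem LinearMap.isDiag_toMatrix {K ι V : Type*} [Field K] [Fintype ι] [DecidableEq ι]
    [AddCommGroup V] [Module K V] (b : Basis ι K V) {f : V →ₗ[K] V}
    (hf : ∀ i, ∃ c : K, f (b i) = c • b i) : (toMatrix b b f).IsDiag := by
  intro i j hij
  obtain ⟨c, hc⟩ := hf j
  simp [toMatrix_apply, hc, hij.symm]

theorem Matrix.exists_isUnit_forall_isDiag_conj {K ι κ X : Type*} [Field K] [Fintype ι]
    [DecidableEq ι] (b : Basis κ K (ι → K)) (A : X → Matrix ι ι K)
    (hA : ∀ x k, ∃ c : K, A x *ᵥ b k = c • b k) :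
    ∃ g : Matrix ι ι K, IsUnit g ∧ ∀ x, (g * A x * g⁻¹).IsDiag := by
  let b' := b.reindex (b.indexEquiv (Pi.basisFun K ι))
  have hinv : b'.toMatrix (Pi.basisFun K ι) * (Pi.basisFun K ι).toMatrix b' = 1 :=
    b'.toMatrix_mul_toMatrix_flip _
  refine ⟨_, .of_mul_eq_one _ hinv, fun x ↦ ?_⟩
  rw [inv_eq_right_inv hinv, ← LinearMap.toMatrix'_toLin' (A x),
    ← LinearMap.toMatrix_eq_toMatrix', basis_toMatrix_mul_linearMap_toMatrix_mul_basis_toMatrix]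
  exact LinearMap.isDiag_toMatrix b' fun i ↦ by simpa [b'] using hA x _

namespace LieModule

section

variable {R L M : Type*} [CommRing R] [LieRing L] [LieAlgebra R L] [LieRing.IsNilpotent L]
  [AddCommGroup M] [Module R M] [LieRingModule L M] [LieModule R L M]

theorem apply_eq_smul_of_mem_genWeightSpace_s7 {x : L} {f : End R M} (hf : f.IsFinitelySemisimple)
    (hcomm : Commute (toEnd R L M x) f) (hnil : _root_.IsNilpotent (toEnd R L M x - f))
    {χ : L → R} {m : M} (hm : m ∈ genWeightSpace M χ) : f m = χ x • m :=
  End.apply_eq_of_mem_of_comm_of_isFinitelySemisimple_of_isNil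
    (genWeightSpace_le_genWeightSpaceOf M x χ hm) hcomm hf hnil

end

variable (K L M : Type*) [Field K] [LieRing L] [LieAlgebra K L] [LieRing.IsNilpotent L]
  [AddCommGroup M] [Module K M] [LieRingModule L M] [LieModule K L M] [FiniteDimensional K M]
  [IsTriangularizable K L M]

theorem exists_basis_mem_genWeightSpace :
    ∃ b : Basis (Σ χ : Weight K L M, Fin (finrank K (genWeightSpace M χ))) K M,
      ∀ i, b i ∈ genWeightSpace M i.1 := by
  classical
  have hM : DirectSum.IsInternal fun χ : Weight K L M ↦ (genWeightSpace M χ : Submodule K M) :=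
    DirectSum.isInternal_submodule_of_iSupIndep_of_iSup_eq_top
      (LieSubmodule.iSupIndep_toSubmodule.mpr (iSupIndep_genWeightSpace' K L M))
      (LieSubmodule.iSup_toSubmodule_eq_top.mpr (iSup_genWeightSpace_eq_top' K L M))
  exact ⟨hM.collectedBasis fun χ ↦ finBasis K _, hM.collectedBasis_mem _⟩

end LieModule

attribute [local instance 100] LieRing.ofAssociativeRing

theorem semisimpleParts_simultaneously_diagonalizable_general {L : Type*} [LieRing L]
    [LieAlgebra ℂ L] [LieRing.IsNilpotent L] {n : ℕ}
    (ρ : L →ₗ⁅ℂ⁆ Matrix (Fin n) (Fin n) ℂ) (s : L → Matrix (Fin n) (Fin n) ℂ)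
    (hdiag : ∀ x, (s x).IsDiagonalizable)
    (hcomm : ∀ x, s x * ρ x = ρ x * s x)
    (hnil : ∀ x, IsNilpotent (ρ x - s x)) :
    ∃ g : Matrix (Fin n) (Fin n) ℂ, IsUnit g ∧ ∀ x, (g * s x * g⁻¹).IsDiag := by
  let φ : L →ₗ⁅ℂ⁆ End ℂ (Fin n → ℂ) :=
    (toLinAlgEquiv' : Matrix (Fin n) (Fin n) ℂ ≃ₐ[ℂ] _).toAlgHom.toLieHom.comp ρ
  let _ := LieRingModule.compLieHom (Fin n → ℂ) φ
  let _ := LieModule.compLieHom (Fin n → ℂ) φ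
  obtain ⟨b, hb⟩ := LieModule.exists_basis_mem_genWeightSpace ℂ L (Fin n → ℂ)
  refine exists_isUnit_forall_isDiag_conj b s fun x i ↦ ⟨i.1 x, ?_⟩
  rw [← toLin'_apply]
  refine LieModule.apply_eq_smul_of_mem_genWeightSpace_s7
    (hdiag x).isSemisimple_toLin'_s7.isFinitelySemisimple ?commute ?nilpotent (hb i)
  case commute => exact Commute.map (hcomm x).symm toLinAlgEquiv'
  case nilpotent =>
    have := (hnil x).map toLinAlgEquiv'
    rwa [map_sub] at this

/-- Let `ρ` be a matrix representation of a finite-dimensional nilpotent complex Lie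
algebra `𝔫` and let `s` assign to each `x` the semisimple part of `ρ x`.  Then the
image of `s` is simultaneously diagonalizable. -/
theorem semisimpleParts_simultaneously_diagonalizable {L : Type*} [LieRing L]
    [LieAlgebra ℂ L] [FiniteDimensional ℂ L] [LieRing.IsNilpotent L] {n : ℕ}
    (ρ : L →ₗ⁅ℂ⁆ Matrix (Fin n) (Fin n) ℂ) (s : L → Matrix (Fin n) (Fin n) ℂ)
    (hdiag : ∀ x, (s x).IsDiagonalizable)
    (hcomm : ∀ x, s x * ρ x = ρ x * s x)
    (hnil : ∀ x, IsNilpotent (ρ x - s x)) :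
    ∃ g : Matrix (Fin n) (Fin n) ℂ, IsUnit g ∧ ∀ x, (g * s x * g⁻¹).IsDiag :=
  semisimpleParts_simultaneously_diagonalizable_general ρ s hdiag hcomm hnil
end

section
/- Let 𝔫 be a finite-dimensional nilpotent Lie algebra over ℂ and let ρ : 𝔫 → M_n(ℂ) be a Lie algebra homomorphism. Let x_1, …, x_k ∈ 𝔫 and for each i let S_i be the semisimple part of ρ(x_i) (so ρ(x_i) = S_i + N_i with S_i diagonalizable, N_i nilpotent, S_i N_i = N_i S_i). Then Tr(ρ(x_1) ρ(x_2) ⋯ ρ(x_k)) = Tr(S_1 S_2 ⋯ S_k). -/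
attribute [local instance 100] LieRing.ofAssociativeRing

open Set Module Module.End Polynomial

namespace Module.End

variable {R M : Type*} [CommRing R] [AddCommGroup M] [Module R M]

section Filtration

variable {F : ℕ → Submodule R M}

lemma pow_eq_zero_of_mapsTo_succ {D : End R M} (hD : ∀ j, MapsTo D (F j) (F (j + 1)))
    (h0 : F 0 = ⊤) {m : ℕ} (hm : F m = ⊥) : D ^ m = 0 := by
  have key : ∀ t, MapsTo ⇑(D ^ t) (F 0 : Set M) (F t) := by
    intro t
    induction t with
    | zero => intro v hv; simpa using hv
    | succ t ih => rw [pow_succ', coe_mul]; exact (hD t).comp ih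
  ext v
  simpa [hm] using key m (by simp [h0] : v ∈ F 0)

lemma mapsTo_ofFn_prod_add_algebraMap_sub (hF : Antitone F) {k : ℕ} (D : Fin k → End R M)
    (hD : ∀ i j, MapsTo (D i) (F j) (F (j + 1))) (c : Fin k → R) (j : ℕ) :
    MapsTo ⇑((List.ofFn fun i => D i + algebraMap R _ (c i)).prod - algebraMap R _ (∏ i, c i))
      (F j : Set M) (F (j + 1)) := by
  induction k with
  | zero => intro v _; simp
  | succ k ih =>
    intro v hv
    set P := (List.ofFn fun i : Fin k => D i.succ + algebraMap R _ (c i.succ)).prod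
    have hP : P v - (∏ i : Fin k, c i.succ) • v ∈ F (j + 1) :=
      ih (fun i => D i.succ) (fun i => hD i.succ) (fun i => c i.succ) hv
    have hPv : P v ∈ F j := by
      simpa using (F j).add_mem (hF j.le_succ hP) ((F j).smul_mem (∏ i : Fin k, c i.succ) hv)
    have expand : ((List.ofFn fun i => D i + algebraMap R _ (c i)).prod -
        algebraMap R _ (∏ i, c i)) v = D 0 (P v) + c 0 • (P v - (∏ i : Fin k, c i.succ) • v) := by
      simp only [List.ofFn_succ, List.prod_cons, Fin.prod_univ_succ, LinearMap.sub_apply,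
        mul_apply, LinearMap.add_apply, algebraMap_end_apply, P, smul_sub, mul_smul]
      abel
    rw [expand]
    exact (F (j + 1)).add_mem (hD 0 j hPv) ((F (j + 1)).smul_mem _ hP)

end Filtration

lemma mapsTo_ofFn_prod {k : ℕ} (f : Fin k → End R M) {p : Submodule R M}
    (hf : ∀ i, MapsTo (f i) p p) : MapsTo ⇑(List.ofFn f).prod p p := by
  induction k with
  | zero => intro v hv; simpa using hv
  | succ k ih =>
    rw [List.ofFn_succ, List.prod_cons, coe_mul]
    exact (hf 0).comp (ih _ fun i => hf i.succ)

lemma restrict_ofFn_prod {k : ℕ} (f : Fin k → End R M) {p : Submodule R M}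
    (hf : ∀ i, MapsTo (f i) p p) (h : MapsTo ⇑(List.ofFn f).prod p p := mapsTo_ofFn_prod f hf) :
    (List.ofFn f).prod.restrict h = (List.ofFn fun i => (f i).restrict (hf i)).prod := by
  induction k with
  | zero => ext; simp
  | succ k ih =>
    have htail := ih (fun i => f i.succ) (fun i => hf i.succ)
      (mapsTo_ofFn_prod _ fun i => hf i.succ)
    simp only [List.ofFn_succ, List.prod_cons] at h ⊢
    rw [← htail]
    rfl

lemma mapsTo_of_mem_adjoin_singleton {f g : End R M} (hg : g ∈ Algebra.adjoin R {f})
    {p : Submodule R M} (hf : MapsTo f p p) : MapsTo g p p := by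
  rw [Algebra.adjoin_singleton_eq_range_aeval] at hg
  obtain ⟨q, rfl⟩ := hg
  exact fun v hv => q.aeval_apply_smul_mem_of_le_comap hv f hf

section Field

variable {K V : Type*} [Field K] [AddCommGroup V] [Module K V] {f s : End K V}

lemma IsSemisimple.mem_adjoin_of_isNilpotent_sub [PerfectField K] [FiniteDimensional K V]
    (hs : s.IsSemisimple) (hn : IsNilpotent (f - s)) (hc : Commute s f) :
    s ∈ Algebra.adjoin K {f} := by
  obtain ⟨n₀, hn₀, s₀, hs₀, hn₀_nil, hs₀_ss, hf⟩ := f.exists_isNilpotent_isSemisimple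
  have hc₀ : Commute n₀ s₀ :=
    Algebra.commute_of_mem_adjoin_singleton_of_commute hs₀
      (Algebra.commute_of_mem_adjoin_self hn₀).symm
  obtain ⟨-, rfl⟩ := isNilpotent_isSemisimple_unique hn hs hn₀_nil hs₀_ss
    (hc.symm.sub_left (Commute.refl s)) hc₀ (by rw [sub_add_cancel, hf])
  exact hs₀

lemma IsSemisimple.restrict_eq_algebraMap (hs : s.IsSemisimple) (hn : IsNilpotent (f - s))
    (hc : Commute s f) {p : Submodule K V} (hf : MapsTo f p p) (hsp : MapsTo s p p) {μ : K}
    (hμ : IsNilpotent (f.restrict hf - algebraMap K _ μ)) :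
    s.restrict hsp = algebraMap K _ μ := by
  have hfs : MapsTo ⇑(f - s) p p := fun v hv => p.sub_mem (hf hv) (hsp hv)
  have hdiff : s.restrict hsp - algebraMap K _ μ =
      (f.restrict hf - algebraMap K _ μ) - (f - s).restrict hfs := by
    rw [← LinearMap.restrict_sub hf hsp hfs]; abel
  have hcomm : Commute (f.restrict hf - algebraMap K _ μ) ((f - s).restrict hfs) :=
    (LinearMap.restrict_commute ((Commute.refl f).sub_right hc.symm) hf hfs).sub_left
      (Algebra.commute_algebraMap_left μ _)
  have hnil : IsNilpotent (s.restrict hsp - algebraMap K _ μ) :=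
    hdiff ▸ hcomm.isNilpotent_sub hμ (isNilpotent.restrict hfs hn)
  have hss : IsSemisimple (s.restrict hsp - algebraMap K _ μ) :=
    isSemisimple_sub_algebraMap_iff.mpr (hs.restrict hsp)
  exact sub_eq_zero.mp (eq_zero_of_isNilpotent_isSemisimple hnil hss)

end Field

end Module.End

namespace LieModule

variable {K L M : Type*} [Field K] [LieRing L] [LieAlgebra K L] [AddCommGroup M] [Module K M]
  [LieRingModule L M] [LieModule K L M] [FiniteDimensional K M]

lemma trace_prod_toEnd_add_algebraMap [IsNilpotent L M] {k : ℕ} (x : Fin k → L)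
    (c : Fin k → K) :
    LinearMap.trace K M (List.ofFn fun i => toEnd K L M (x i) + algebraMap K _ (c i)).prod =
      finrank K M • ∏ i, c i := by
  obtain ⟨m, hm⟩ := IsNilpotent.nilpotent K L M
  have hlower : ∀ i j, MapsTo (toEnd K L M (x i))
      (lowerCentralSeries K L M j : Set M) (lowerCentralSeries K L M (j + 1)) := fun i j v hv => by
    rw [lowerCentralSeries_succ]
    exact LieSubmodule.lie_mem_lie (LieSubmodule.mem_top (x i)) hv
  have hnil : _root_.IsNilpotent ((List.ofFn fun i => toEnd K L M (x i) +
      algebraMap K _ (c i)).prod - algebraMap K _ (∏ i, c i)) :=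
    ⟨m, pow_eq_zero_of_mapsTo_succ (F := fun j => lowerCentralSeries K L M j)
      (mapsTo_ofFn_prod_add_algebraMap_sub
        (fun _ _ hij => antitone_lowerCentralSeries K L M hij) _ hlower c)
      (by simp) (by simp [hm])⟩
  have := (LinearMap.isNilpotent_trace_of_isNilpotent hnil).eq_zero
  rwa [map_sub, Algebra.algebraMap_eq_smul_one, map_smul, LinearMap.trace_one, sub_eq_zero,
    smul_eq_mul, mul_comm, ← nsmul_eq_mul] at this

variable [LieRing.IsNilpotent L]

lemma trace_prod_toEnd_genWeightSpace [LinearWeights K L M] (χ : L → K) {k : ℕ} (x : Fin k → L) :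
    LinearMap.trace K (genWeightSpace M χ)
        (List.ofFn fun i => toEnd K L (genWeightSpace M χ) (x i)).prod =
      finrank K (genWeightSpace M χ) • ∏ i, χ (x i) := by
  let e := shiftedGenWeightSpace.shift K L M χ
  have hshift : ∀ y, toEnd K L (genWeightSpace M χ) y =
      e.symm.conjAlgEquiv K (toEnd K L (shiftedGenWeightSpace K L M χ) y + algebraMap K _ (χ y)) :=
    fun y => by ext v; exact (sub_add_cancel _ _).symm
  rw [funext fun i => hshift (x i), List.ofFn_comp', ← map_list_prod]
  exact (LinearMap.trace_conj' _ e.symm).trans (trace_prod_toEnd_add_algebraMap _ _)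

lemma trace_eq_sum_trace_restrict_genWeightSpace [IsTriangularizable K L M] {f : End K M}
    (hf : ∀ χ : Weight K L M, MapsTo f (genWeightSpace M χ) (genWeightSpace M χ)) :
    LinearMap.trace K M f =
      ∑ χ : Weight K L M,
        LinearMap.trace K (genWeightSpace M χ : Submodule K M) (f.restrict (hf χ)) := by
  classical
  have hds : DirectSum.IsInternal fun χ : Weight K L M => (genWeightSpace M χ : Submodule K M) :=
    DirectSum.isInternal_submodule_of_iSupIndep_of_iSup_eq_top
      (LieSubmodule.iSupIndep_toSubmodule.mpr (iSupIndep_genWeightSpace' K L M))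
      (LieSubmodule.iSup_toSubmodule_eq_top.mpr (iSup_genWeightSpace_eq_top' K L M))
  exact LinearMap.trace_eq_sum_trace_restrict hds hf

theorem trace_prod_toEnd_eq_trace_prod_of_isSemisimple [CharZero K] [IsTriangularizable K L M]
    {k : ℕ} (x : Fin k → L) (s : Fin k → End K M) (hs : ∀ i, (s i).IsSemisimple)
    (hn : ∀ i, _root_.IsNilpotent (toEnd K L M (x i) - s i))
    (hc : ∀ i, Commute (s i) (toEnd K L M (x i))) :
    LinearMap.trace K M (List.ofFn fun i => toEnd K L M (x i)).prod =
      LinearMap.trace K M (List.ofFn s).prod := by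
  have hxW : ∀ i (χ : Weight K L M), MapsTo (toEnd K L M (x i)) (genWeightSpace M χ)
      (genWeightSpace M χ) := fun i χ _ hv => (genWeightSpace M χ).lie_mem hv
  have hsW : ∀ i (χ : Weight K L M), MapsTo (s i) (genWeightSpace M χ) (genWeightSpace M χ) :=
    fun i χ => mapsTo_of_mem_adjoin_singleton
      ((hs i).mem_adjoin_of_isNilpotent_sub (hn i) (hc i)) (hxW i χ)
  have hsχ : ∀ i (χ : Weight K L M), (s i).restrict (hsW i χ) = algebraMap K _ (χ (x i)) :=
    fun i χ => (hs i).restrict_eq_algebraMap (hn i) (hc i) (hxW i χ) (hsW i χ)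
      (isNilpotent_toEnd_sub_algebraMap M χ (x i))
  rw [trace_eq_sum_trace_restrict_genWeightSpace fun χ => mapsTo_ofFn_prod _ (hxW · χ),
    trace_eq_sum_trace_restrict_genWeightSpace fun χ => mapsTo_ofFn_prod _ (hsW · χ)]
  refine Finset.sum_congr rfl fun χ _ => ?_
  rw [restrict_ofFn_prod _ (hxW · χ), restrict_ofFn_prod _ (hsW · χ), funext fun i => hsχ i χ,
    List.ofFn_comp', ← map_list_prod, List.prod_ofFn, Algebra.algebraMap_eq_smul_one, map_smul,
    LinearMap.trace_one, smul_eq_mul, mul_comm, ← nsmul_eq_mul]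
  exact trace_prod_toEnd_genWeightSpace χ x

end LieModule

namespace Matrix

variable {n R K : Type*} [Fintype n] [DecidableEq n]

lemma trace_ofFn_prod_eq_linearMap_trace [CommRing R] {k : ℕ} (A : Fin k → Matrix n n R) :
    (List.ofFn A).prod.trace =
      LinearMap.trace R (n → R) (List.ofFn fun i => toLinAlgEquiv' (A i)).prod := by
  rw [List.ofFn_comp' A toLinAlgEquiv', ← map_list_prod]
  exact (trace_toLin'_eq _).symm

lemma isSemisimple_toLin'_diagonal_s8 [Field K] (d : n → K) : IsSemisimple (toLin' (diagonal d)) := by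
  classical
  let p : K[X] := ∏ c ∈ Finset.univ.image d, (X - C c)
  refine isSemisimple_of_squarefree_aeval_eq_zero (p := p)
    (separable_prod_X_sub_C_iff'.mpr fun _ _ _ _ h => h).squarefree ?_
  refine (Pi.basisFun K n).ext fun i => ?_
  rw [aeval_apply_of_hasEigenvector (hasEigenvector_toLin'_diagonal d i), eval_prod,
    Finset.prod_eq_zero (Finset.mem_image_of_mem d (Finset.mem_univ i)) (by simp), zero_smul,
    LinearMap.zero_apply]

lemma IsDiagonalizable.isSemisimple_toLin'_s8 {m : ℕ} {A : Matrix (Fin m) (Fin m) ℂ}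
    (hA : A.IsDiagonalizable) : IsSemisimple (toLin' A) := by
  obtain ⟨P, hP, hD⟩ := hA
  have := hP.invertible
  rw [LinearEquiv.isSemisimple_iff _ (toLin' (P * A * P⁻¹)) (P.toLinearEquiv' this),
    ← hD.diagonal_diag]
  · exact isSemisimple_toLin'_diagonal_s8 _
  · rw [show (P.toLinearEquiv' this : _ →ₗ[ℂ] _) = toLin' P from rfl, ← toLin'_mul, ← toLin'_mul,
      mul_assoc (P * A), inv_mul_of_invertible, mul_one]

end Matrix

theorem trace_prod_eq_trace_prod_semisimpleParts_general {L : Type*} [LieRing L]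
    [LieAlgebra ℂ L] [LieRing.IsNilpotent L] {n : ℕ}
    (ρ : L →ₗ⁅ℂ⁆ Matrix (Fin n) (Fin n) ℂ) (k : ℕ) (x : Fin k → L)
    (S N : Fin k → Matrix (Fin n) (Fin n) ℂ)
    (hdec : ∀ i, ρ (x i) = S i + N i)
    (hS : ∀ i, (S i).IsDiagonalizable) (hN : ∀ i, IsNilpotent (N i))
    (hSN : ∀ i, S i * N i = N i * S i) :
    Matrix.trace ((List.ofFn fun i => ρ (x i)).prod) =
      Matrix.trace ((List.ofFn fun i => S i).prod) := by
  let _ := LieRingModule.compLieHom (Fin n → ℂ) (lieEquivMatrix'.symm.toLieHom.comp ρ)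
  let _ := LieModule.compLieHom (Fin n → ℂ) (lieEquivMatrix'.symm.toLieHom.comp ρ)
  have hρ : ∀ i, LieModule.toEnd ℂ L (Fin n → ℂ) (x i) = Matrix.toLinAlgEquiv' (S i + N i) :=
    fun i => by rw [← hdec]; rfl
  rw [Matrix.trace_ofFn_prod_eq_linearMap_trace, Matrix.trace_ofFn_prod_eq_linearMap_trace]
  refine LieModule.trace_prod_toEnd_eq_trace_prod_of_isSemisimple x _
    (fun i => (hS i).isSemisimple_toLin'_s8) (fun i => ?_) (fun i => ?_)
  · rw [hρ, map_add, add_sub_cancel_left]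
    exact (hN i).map _
  · rw [hρ]
    exact ((Commute.refl (S i)).add_right (hSN i)).map _

/-- Let `ρ` be a matrix representation of a finite-dimensional nilpotent complex Lie
algebra `𝔫`, let `x 1, …, x k ∈ 𝔫` and let `S i` be the semisimple part of `ρ (x i)`.
Then `Tr(ρ(x₁) ⋯ ρ(x_k)) = Tr(S₁ ⋯ S_k)`. -/
theorem trace_prod_eq_trace_prod_semisimpleParts {L : Type*} [LieRing L]
    [LieAlgebra ℂ L] [FiniteDimensional ℂ L] [LieRing.IsNilpotent L] {n : ℕ}
    (ρ : L →ₗ⁅ℂ⁆ Matrix (Fin n) (Fin n) ℂ) (k : ℕ) (x : Fin k → L)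
    (S N : Fin k → Matrix (Fin n) (Fin n) ℂ)
    (hdec : ∀ i, ρ (x i) = S i + N i)
    (hS : ∀ i, (S i).IsDiagonalizable) (hN : ∀ i, IsNilpotent (N i))
    (hSN : ∀ i, S i * N i = N i * S i) :
    Matrix.trace ((List.ofFn fun i => ρ (x i)).prod) =
      Matrix.trace ((List.ofFn fun i => S i).prod) :=
  trace_prod_eq_trace_prod_semisimpleParts_general ρ k x S N hdec hS hN hSN
end

section
/- Let d_1, …, d_m and e_1, …, e_m be functions from {1, …, n} to ℂ, and set A_i = diag(d_i) and B_i = diag(e_i), diagonal matrices in M_n(ℂ). Suppose that for every k ≥ 1 and every sequence of indices i_1, …, i_k ∈ {1, …, m}, Tr(A_{i_1} A_{i_2} ⋯ A_{i_k}) = Tr(B_{i_1} B_{i_2} ⋯ B_{i_k}). Then there exists a permutation σ of {1, …, n} such that e_i(j) = d_i(σ(j)) for all 1 ≤ i ≤ m and 1 ≤ j ≤ n; equivalently, the tuple (B_1, …, B_m) is obtained from (A_1, …, A_m) by simultaneous conjugation with a single permutation matrix. -/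
open Finset in
private lemma diag_list_prod {n k : ℕ} (c : Fin k → Fin n → ℂ) :
    (List.ofFn fun t => Matrix.diagonal (c t)).prod
      = Matrix.diagonal (fun j => ∏ t, c t j) := by
  induction k with
  | zero => simp [Matrix.diagonal_one]
  | succ k ih =>
    rw [List.ofFn_succ, List.prod_cons, ih fun t => c t.succ, Matrix.diagonal_mul_diagonal]
    exact congrArg Matrix.diagonal (funext fun j => (Fin.prod_univ_succ (fun t => c t j)).symm)

open Finset in
private lemma sum_prod_eq {m n : ℕ} (d e : Fin m → Fin n → ℂ)
    (h : ∀ (k : ℕ), 0 < k → ∀ idx : Fin k → Fin m,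
      Matrix.trace ((List.ofFn fun t => Matrix.diagonal (d (idx t))).prod) =
        Matrix.trace ((List.ofFn fun t => Matrix.diagonal (e (idx t))).prod))
    (k : ℕ) (hk : 0 < k) (idx : Fin k → Fin m) :
    ∑ j, ∏ t, d (idx t) j = ∑ j, ∏ t, e (idx t) j := by
  have := h k hk idx
  rwa [diag_list_prod, diag_list_prod, Matrix.trace_diagonal, Matrix.trace_diagonal] at this

open Finset in
private lemma word_prod {m : ℕ} (α : Fin m →₀ ℕ) (f : Fin m → ℂ) :
    ∏ t : Fin ((List.finRange m).flatMap fun i => List.replicate (α i) i).length,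
      f (((List.finRange m).flatMap fun i => List.replicate (α i) i).get t) = ∏ i, f i ^ α i := by
  set l := (List.finRange m).flatMap fun i => List.replicate (α i) i with hl
  calc ∏ t : Fin l.length, f (l.get t) = (List.ofFn (f ∘ l.get)).prod := List.prod_ofFn.symm
    _ = (l.map f).prod := by rw [← List.map_ofFn, List.ofFn_get]
    _ = ∏ i, f i ^ α i := by
        rw [hl, List.flatMap_def, List.map_flatten, List.prod_flatten, List.map_map, List.map_map]
        simp only [Function.comp_def, List.map_replicate, List.prod_replicate]
        rw [← List.ofFn_eq_map, List.prod_ofFn]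

open Finset in
private lemma mono_sum {m n : ℕ} (d e : Fin m → Fin n → ℂ)
    (h : ∀ (k : ℕ), 0 < k → ∀ idx : Fin k → Fin m,
      ∑ j, ∏ t, d (idx t) j = ∑ j, ∏ t, e (idx t) j)
    (α : Fin m →₀ ℕ) :
    ∑ j, ∏ i, d i j ^ α i = ∑ j, ∏ i, e i j ^ α i := by
  by_cases hα : α = 0
  · simp [hα]
  · obtain ⟨i0, hi0⟩ := DFunLike.ne_iff.mp hα
    simp only [Finsupp.coe_zero, Pi.zero_apply] at hi0
    set l := (List.finRange m).flatMap fun i => List.replicate (α i) i with hl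
    have hmem : i0 ∈ l :=
      List.mem_flatMap.2 ⟨i0, List.mem_finRange i0, List.mem_replicate.2 ⟨hi0, rfl⟩⟩
    have hlen : 0 < l.length := List.length_pos_iff.2 (List.ne_nil_of_mem hmem)
    have := h l.length hlen l.get
    have hd : ∑ j, ∏ t, d (l.get t) j = ∑ j, ∏ i, d i j ^ α i :=
      Finset.sum_congr rfl fun j _ => word_prod α fun i => d i j
    have he : ∑ j, ∏ t, e (l.get t) j = ∑ j, ∏ i, e i j ^ α i :=
      Finset.sum_congr rfl fun j _ => word_prod α fun i => e i j
    rw [hd, he] at this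
    exact this

open Finset in
private lemma poly_sum {m n : ℕ} (d e : Fin m → Fin n → ℂ)
    (h : ∀ α : Fin m →₀ ℕ, ∑ j, ∏ i, d i j ^ α i = ∑ j, ∏ i, e i j ^ α i)
    (p : MvPolynomial (Fin m) ℂ) :
    ∑ j, MvPolynomial.eval (fun i => d i j) p = ∑ j, MvPolynomial.eval (fun i => e i j) p := by
  simp only [MvPolynomial.eval_eq]
  rw [Finset.sum_comm, Finset.sum_comm (s := Finset.univ)]
  refine Finset.sum_congr rfl fun α _ => ?_
  have key : ∀ f : Fin m → ℂ, ∏ i ∈ α.support, f i ^ α i = ∏ i, f i ^ α i := fun f =>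
    Finset.prod_subset (Finset.subset_univ _) (fun i _ hi => by
      simp [Finsupp.notMem_support_iff.mp hi])
  simp only [key, ← Finset.mul_sum]
  rw [h α]

open Finset MvPolynomial

/-- If two `m`-tuples of diagonal matrices `diag(d i)`, `diag(e i)` have equal
generalized traces, then they differ by simultaneous conjugation by a single
permutation. -/
theorem exists_perm_of_generalized_traces_eq {m n : ℕ} (d e : Fin m → Fin n → ℂ)
    (h : ∀ (k : ℕ), 0 < k → ∀ idx : Fin k → Fin m,
      Matrix.trace ((List.ofFn fun t => Matrix.diagonal (d (idx t))).prod) =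
        Matrix.trace ((List.ofFn fun t => Matrix.diagonal (e (idx t))).prod)) :
    ∃ σ : Equiv.Perm (Fin n), ∀ (i : Fin m) (j : Fin n), e i j = d i (σ j) := by
  classical
  have hsum : ∀ (k : ℕ), 0 < k → ∀ idx : Fin k → Fin m,
      ∑ j, ∏ t, d (idx t) j = ∑ j, ∏ t, e (idx t) j := sum_prod_eq d e h
  have hmono := mono_sum d e hsum
  have hpoly := poly_sum d e hmono
  set V : Fin n → (Fin m → ℂ) := fun j i => d i j with hV
  set W : Fin n → (Fin m → ℂ) := fun j i => e i j with hW
  set S : Fin m → Finset ℂ := fun i => (univ.image (d i)) ∪ (univ.image (e i)) with hS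
  set p : (Fin m → ℂ) → MvPolynomial (Fin m) ℂ := fun a =>
    ∏ i, ∏ s ∈ (S i).erase (a i), (C ((a i - s)⁻¹) * (X i - C s)) with hp
  have heval : ∀ (a x : Fin m → ℂ),
      eval x (p a) = ∏ i, ∏ s ∈ (S i).erase (a i), ((a i - s)⁻¹ * (x i - s)) := by
    intro a x
    simp [hp, eval_prod]
  have heval_self : ∀ a : Fin m → ℂ, eval a (p a) = 1 := by
    intro a
    rw [heval]
    refine Finset.prod_eq_one fun i _ => Finset.prod_eq_one fun s hs => ?_
    have hne : a i - s ≠ 0 := sub_ne_zero.2 (Ne.symm (Finset.ne_of_mem_erase hs))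
    exact inv_mul_cancel₀ hne
  have heval_other : ∀ a x : Fin m → ℂ, (∀ i, x i ∈ S i) → x ≠ a → eval x (p a) = 0 := by
    intro a x hx hne
    rw [heval]
    obtain ⟨i, hi⟩ : ∃ i, x i ≠ a i := by
      by_contra hc
      push_neg at hc
      exact hne (funext hc)
    refine Finset.prod_eq_zero (Finset.mem_univ i) ?_
    refine Finset.prod_eq_zero (Finset.mem_erase.2 ⟨hi, hx i⟩) ?_
    simp
  have hmemV : ∀ j i, V j i ∈ S i := fun j i =>
    Finset.mem_union_left _ (Finset.mem_image_of_mem _ (Finset.mem_univ j))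
  have hmemW : ∀ j i, W j i ∈ S i := fun j i =>
    Finset.mem_union_right _ (Finset.mem_image_of_mem _ (Finset.mem_univ j))
  have hcard : ∀ (F : Fin n → (Fin m → ℂ)), (∀ j i, F j i ∈ S i) → ∀ a : Fin m → ℂ,
      ∑ j, eval (F j) (p a) = ((univ.filter fun j => F j = a).card : ℂ) := by
    intro F hF a
    rw [Finset.card_filter]
    push_cast
    refine Finset.sum_congr rfl fun j _ => ?_
    by_cases hj : F j = a
    · rw [hj, heval_self]; simp
    · rw [heval_other a (F j) (hF j) hj]; simp [hj]
  have hcount : ∀ a : Fin m → ℂ,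
      (univ.filter fun j => W j = a).card = (univ.filter fun j => V j = a).card := by
    intro a
    have h1 : ∑ j, eval (V j) (p a) = ∑ j, eval (W j) (p a) := by
      have := hpoly (p a)
      simpa [hV, hW] using this
    have h2 := hcard V hmemV a
    have h3 := hcard W hmemW a
    have : ((univ.filter fun j => V j = a).card : ℂ) = ((univ.filter fun j => W j = a).card : ℂ) := by
      rw [← h2, ← h3, h1]
    exact_mod_cast this.symm
  have hfib : ∀ a : Fin m → ℂ, Fintype.card {j // W j = a} = Fintype.card {j // V j = a} := by
    intro a
    rw [Fintype.card_subtype, Fintype.card_subtype]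
    exact hcount a
  let fiberEquiv : ∀ a : Fin m → ℂ, {j // W j = a} ≃ {j // V j = a} := fun a =>
    Fintype.equivOfCardEq (hfib a)
  let σ : Equiv.Perm (Fin n) :=
    (Equiv.sigmaFiberEquiv W).symm.trans ((Equiv.sigmaCongrRight fiberEquiv).trans
      (Equiv.sigmaFiberEquiv V))
  have hσ : ∀ j, V (σ j) = W j := by
    intro j
    have : σ j = (fiberEquiv (W j) ⟨j, rfl⟩).val := rfl
    rw [this]
    exact (fiberEquiv (W j) ⟨j, rfl⟩).2
  exact ⟨σ, fun i j => (congrFun (hσ j) i).symm⟩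
end

section
/- Let A_1, …, A_m ∈ M_n(ℂ) and B_1, …, B_m ∈ M_n(ℂ) be two tuples of matrices such that each A_i and each B_i is diagonalizable, [A_i, A_j] = 0 and [B_i, B_j] = 0 for all i, j. Suppose that for every k ≥ 1 and every sequence of indices i_1, …, i_k ∈ {1, …, m}, Tr(A_{i_1} A_{i_2} ⋯ A_{i_k}) = Tr(B_{i_1} B_{i_2} ⋯ B_{i_k}). Then there exists g ∈ GL_n(ℂ) such that B_i = g A_i g^{-1} for all 1 ≤ i ≤ m. -/
open Module Module.End Matrix MvPolynomial Finset

namespace Module.End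

section CommRing

variable {R M ι κ : Type*} [CommRing R] [AddCommGroup M] [Module R M]

theorem list_prod_map_apply_eq_smul (f : ι → End R M) {x : M} {c : ι → R}
    (h : ∀ i, f i x = c i • x) (l : List ι) : (l.map f).prod x = (l.map c).prod • x := by
  induction l with
  | nil => simp
  | cons i l ih => simp [ih, h, mul_smul, smul_comm (c i)]

theorem trace_eq_sum_of_apply_basis_eq_smul [Fintype κ] [DecidableEq κ] (b : Basis κ R M)
    {g : End R M} {c : κ → R} (h : ∀ j, g (b j) = c j • b j) :
    LinearMap.trace R M g = ∑ j, c j := by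
  simp [LinearMap.trace_eq_matrix_trace R b, Matrix.trace, LinearMap.toMatrix_apply, h]

theorem trace_list_prod_map_eq_sum [Fintype κ] [DecidableEq κ] (f : ι → End R M)
    (b : Basis κ R M) {v : κ → ι → R} (h : ∀ i j, f i (b j) = v j i • b j) (l : List ι) :
    LinearMap.trace R M (l.map f).prod = ∑ j, (l.map (v j)).prod :=
  trace_eq_sum_of_apply_basis_eq_smul b fun j => list_prod_map_apply_eq_smul f (h · j) l

end CommRing

section Field

variable {K M ι : Type*} [Field K] [AddCommGroup M] [Module K M]

theorem maxGenEigenspace_eq_eigenspace_of_iSup_eigenspace_eq_top {f : End K M}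
    (hf : ⨆ μ, f.eigenspace μ = ⊤) (μ : K) : f.maxGenEigenspace μ = f.eigenspace μ :=
  (congrFun ((f.independent_maxGenEigenspace.le_iff_eq_of_iSup_eq_top hf).mp
    fun _ => eigenspace_le_maxGenEigenspace) μ).symm

theorem exists_basis_apply_eq_smul_of_commute [FiniteDimensional K M] (f : ι → End K M)
    (hcomm : ∀ i j, Commute (f i) (f j)) (hf : ∀ i, ⨆ μ, (f i).eigenspace μ = ⊤) :
    ∃ (b : Basis (Fin (finrank K M)) K M) (v : Fin (finrank K M) → ι → K),
      ∀ i j, f i (b j) = v j i • b j := by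
  classical
  have hgen := fun i => maxGenEigenspace_eq_eigenspace_of_iSup_eigenspace_eq_top (hf i)
  let E : (ι → K) → Submodule K M := fun χ => ⨅ i, (f i).eigenspace (χ i)
  have hint : DirectSum.IsInternal E := by
    refine DirectSum.isInternal_submodule_of_iSupIndep_of_iSup_eq_top ?_ ?_
    · simpa only [hgen] using independent_iInf_maxGenEigenspace_of_forall_mapsTo f
        fun i j μ => mapsTo_maxGenEigenspace_of_comm (hcomm j i) μ
    · simpa only [hgen] using
        iSup_iInf_maxGenEigenspace_eq_top_of_iSup_maxGenEigenspace_eq_top_of_commute f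
          (fun i j _ => hcomm i j) fun i => by simpa only [hgen] using hf i
  let b₀ := hint.collectedBasis fun χ => finBasis K (E χ)
  let e := b₀.indexEquiv (finBasis K M)
  refine ⟨b₀.reindex e, fun j => (e.symm j).1, fun i j => ?_⟩
  have hmem := hint.collectedBasis_mem (fun χ => finBasis K (E χ)) (e.symm j)
  rw [Basis.reindex_apply]
  exact mem_eigenspace_iff.mp ((Submodule.mem_iInf _).mp hmem i)

end Field

end Module.End

theorem Module.Basis.equiv_conj_eq_of_apply_eq_smul {R M ι ι' : Type*} [CommRing R]
    [AddCommGroup M] [Module R M] (b : Basis ι R M) (c : Basis ι' R M) (σ : ι ≃ ι')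
    {f g : End R M} {μ : ι → R} (hf : ∀ j, f (b j) = μ j • b j)
    (hg : ∀ j, g (c (σ j)) = μ j • c (σ j)) : (b.equiv c σ).conj f = g :=
  (c.reindex σ.symm).ext fun j => by simp [LinearEquiv.conj_apply, Basis.equiv_symm, hf, hg]

namespace MvPolynomial

variable {σ ι K : Type*}

theorem sum_eval_eq_of_forall_sum_list_prod_eq [CommSemiring K] [Fintype ι] {v w : ι → σ → K}
    (h : ∀ l : List σ, l ≠ [] → ∑ j, (l.map (v j)).prod = ∑ j, (l.map (w j)).prod)
    (p : MvPolynomial σ K) : ∑ j, eval (v j) p = ∑ j, eval (w j) p := by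
  have h' (l : List σ) : ∑ j, (l.map (v j)).prod = ∑ j, (l.map (w j)).prod := by
    rcases eq_or_ne l [] with rfl | hl
    · simp
    · exact h l hl
  -- strengthened so that multiplying by a variable `X i` only lengthens the word `l`
  suffices ∀ l : List σ, ∑ j, (l.map (v j)).prod * eval (v j) p =
      ∑ j, (l.map (w j)).prod * eval (w j) p by simpa using this []
  induction p using MvPolynomial.induction_on with
  | C a => simp [← sum_mul, h']
  | add p q hp hq => simp [mul_add, sum_add_distrib, hp, hq]
  | mul_X p i ih =>
    intro l
    convert ih (i :: l) using 2 <;>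
      simp only [eval_mul, eval_X, List.map_cons, List.prod_cons] <;> ring

theorem exists_forall_eval_eq_zero_and_eval_ne_zero [CommRing K] [IsDomain K]
    [DecidableEq (σ → K)] (T : Finset (σ → K)) {u : σ → K} (hu : u ∉ T) :
    ∃ p : MvPolynomial σ K, (∀ s ∈ T, eval s p = 0) ∧ eval u p ≠ 0 := by
  induction T using Finset.induction_on with
  | empty => exact ⟨1, by simp⟩
  | insert s T _ ih =>
    obtain ⟨p, hpT, hpu⟩ := ih fun h => hu (mem_insert_of_mem h)
    obtain ⟨i, hi⟩ := Function.ne_iff.mp (ne_of_mem_of_not_mem (mem_insert_self s T) hu).symm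
    refine ⟨p * (X i - C (s i)), ?_, ?_⟩
    · simp +contextual [hpT]
    · simpa [hpu, sub_eq_zero] using hi

theorem card_filter_eq_of_forall_sum_eval_eq [CommRing K] [IsDomain K] [CharZero K] [Fintype ι]
    [DecidableEq (σ → K)] {v w : ι → σ → K}
    (h : ∀ p : MvPolynomial σ K, ∑ j, eval (v j) p = ∑ j, eval (w j) p) (u : σ → K) :
    #{j | v j = u} = #{j | w j = u} := by
  let S := univ.image v ∪ univ.image w
  obtain ⟨p, hp, hpu⟩ := exists_forall_eval_eq_zero_and_eval_ne_zero (S.erase u) (notMem_erase u S)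
  have hsum (x : ι → σ → K) (hx : ∀ j, x j ∈ S) :
      ∑ j, eval (x j) p = #{j | x j = u} * eval u p := by
    rw [card_filter, Nat.cast_sum, sum_mul]
    refine sum_congr rfl fun j _ => ?_
    by_cases hj : x j = u
    · simp [hj]
    · simp [hj, hp _ (mem_erase.mpr ⟨hj, hx j⟩)]
  have := h p
  rw [hsum v fun j => mem_union_left _ (mem_image_of_mem v (mem_univ j)),
    hsum w fun j => mem_union_right _ (mem_image_of_mem w (mem_univ j))] at this
  exact_mod_cast mul_right_cancel₀ hpu this

theorem exists_equiv_of_forall_sum_eval_eq [CommRing K] [IsDomain K] [CharZero K] [Fintype ι]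
    {v w : ι → σ → K} (h : ∀ p : MvPolynomial σ K, ∑ j, eval (v j) p = ∑ j, eval (w j) p) :
    ∃ e : ι ≃ ι, ∀ j, w (e j) = v j := by
  classical
  have hfib (u : σ → K) : { j // v j = u } ≃ { j // w j = u } :=
    Fintype.equivOfCardEq (by
      rw [Fintype.card_subtype, Fintype.card_subtype, card_filter_eq_of_forall_sum_eval_eq h u])
  exact ⟨Equiv.ofFiberEquiv hfib, Equiv.ofFiberEquiv_map hfib⟩

end MvPolynomial

namespace Matrix

theorem IsDiagonalizable.iSup_eigenspace_toLin'_eq_top {n : ℕ}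
    {A : Matrix (Fin n) (Fin n) ℂ} (hA : A.IsDiagonalizable) :
    ⨆ μ, eigenspace (toLin' A) μ = ⊤ := by
  obtain ⟨P, hP, hD⟩ := hA
  have hPP : P⁻¹ * P = 1 := nonsing_inv_mul P ((isUnit_iff_isUnit_det P).mp hP)
  have hAP : A * P⁻¹ = P⁻¹ * diagonal (P * A * P⁻¹).diag := by
    rw [hD.diagonal_diag, ← Matrix.mul_assoc, ← Matrix.mul_assoc, hPP, Matrix.one_mul]
  have hmap (μ : ℂ) :
      (eigenspace (toLin' (diagonal (P * A * P⁻¹).diag)) μ).map (toLin' P⁻¹) ≤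
        eigenspace (toLin' A) μ := by
    rintro - ⟨y, hy, rfl⟩
    rw [SetLike.mem_coe, mem_eigenspace_iff, toLin'_apply] at hy
    rw [mem_eigenspace_iff, toLin'_apply, toLin'_apply, mulVec_mulVec, hAP,
      ← mulVec_mulVec, hy, mulVec_smul]
  refine Submodule.eq_top_iff'.mpr fun x => ?_
  have hx : x = toLin' P⁻¹ (P *ᵥ x) := by rw [toLin'_apply, mulVec_mulVec, hPP, one_mulVec]
  rw [hx]
  refine iSup_mono hmap (?_ : _ ∈ ⨆ μ, _)
  rw [← Submodule.map_iSup, iSup_eigenspace_toLin'_diagonal_eq_top]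
  exact Submodule.mem_map_of_mem trivial

theorem trace_list_prod_map_eq_sum {n ι κ R : Type*} [Fintype n] [DecidableEq n]
    [Fintype κ] [DecidableEq κ] [CommRing R] (A : ι → Matrix n n R) (b : Basis κ R (n → R))
    {v : κ → ι → R} (h : ∀ i j, A i *ᵥ b j = v j i • b j) (l : List ι) :
    trace (l.map A).prod = ∑ j, (l.map (v j)).prod := by
  have hprod : (l.map fun i => toLinAlgEquiv' (A i)).prod = toLinAlgEquiv' (l.map A).prod := by
    simp [map_list_prod, Function.comp_def]
  rw [← Module.End.trace_list_prod_map_eq_sum (fun i => toLinAlgEquiv' (A i)) b h l, hprod]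
  exact (trace_toLin'_eq _).symm

theorem exists_isUnit_toLinAlgEquiv'_conj {n R : Type*} [Fintype n] [DecidableEq n]
    [CommRing R] (e : (n → R) ≃ₗ[R] n → R) :
    ∃ g : Matrix n n R, IsUnit g ∧
      ∀ A, toLinAlgEquiv' (g * A * g⁻¹) = e.conj (toLinAlgEquiv' A) := by
  have hinv : LinearMap.toMatrixAlgEquiv' (e : End R (n → R)) *
      LinearMap.toMatrixAlgEquiv' (e.symm : End R (n → R)) = 1 := by
    rw [← map_mul, mul_eq_comp, LinearEquiv.comp_symm, ← one_eq_id, map_one]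
  refine ⟨_, IsUnit.of_mul_eq_one _ hinv, fun A => ?_⟩
  simp [inv_eq_right_inv hinv, LinearEquiv.conj_apply, mul_eq_comp]

end Matrix

/-- Two commuting tuples of diagonalizable matrices with equal generalized traces are
simultaneously conjugate. -/
theorem exists_conj_of_generalized_traces_eq {m n : ℕ}
    (A B : Fin m → Matrix (Fin n) (Fin n) ℂ)
    (hAd : ∀ i, (A i).IsDiagonalizable) (hBd : ∀ i, (B i).IsDiagonalizable)
    (hAc : ∀ i j, A i * A j = A j * A i) (hBc : ∀ i j, B i * B j = B j * B i)
    (h : ∀ (k : ℕ), 0 < k → ∀ idx : Fin k → Fin m,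
      Matrix.trace ((List.ofFn fun t => A (idx t)).prod) =
        Matrix.trace ((List.ofFn fun t => B (idx t)).prod)) :
    ∃ g : Matrix (Fin n) (Fin n) ℂ, IsUnit g ∧ ∀ i, B i = g * A i * g⁻¹ := by
  obtain ⟨b, v, hb⟩ := exists_basis_apply_eq_smul_of_commute (fun i => toLinAlgEquiv' (A i))
    (fun i j => Commute.map (hAc i j) toLinAlgEquiv') fun i => (hAd i).iSup_eigenspace_toLin'_eq_top
  obtain ⟨c, w, hc⟩ := exists_basis_apply_eq_smul_of_commute (fun i => toLinAlgEquiv' (B i))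
    (fun i j => Commute.map (hBc i j) toLinAlgEquiv') fun i => (hBd i).iSup_eigenspace_toLin'_eq_top
  have hword (l : List (Fin m)) (hl : l ≠ []) :
      ∑ j, (l.map (v j)).prod = ∑ j, (l.map (w j)).prod := by
    have := h l.length (List.length_pos_iff.mpr hl) l.get
    simp only [List.get_eq_getElem, List.ofFn_getElem_eq_map] at this
    rwa [← trace_list_prod_map_eq_sum A b hb, ← trace_list_prod_map_eq_sum B c hc]
  obtain ⟨σ, hσ⟩ :=
    exists_equiv_of_forall_sum_eval_eq (sum_eval_eq_of_forall_sum_list_prod_eq hword)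
  obtain ⟨g, hg, hconj⟩ := exists_isUnit_toLinAlgEquiv'_conj (b.equiv c σ)
  refine ⟨g, hg, fun i => toLinAlgEquiv'.injective ?_⟩
  rw [hconj]
  exact (b.equiv_conj_eq_of_apply_eq_smul c σ (hb i) fun j => by rw [hc, hσ]).symm
end

section
/- Let N, M ∈ M_n(ℂ) be nilpotent matrices. If exp(N) = exp(M), then N = M; that is, the matrix exponential is injective on nilpotent matrices. -/
/-!
Truncated at degree `s`, the series of `exp X` and `log (1 + X)` satisfy
`log (exp X - 1) ≡ X` modulo `X ^ (s + 1)`; comparing derivatives reduces this to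
`(1 + X) * log' (1 + X) ≡ 1` and `exp' ≡ exp`. If `a ^ (s + 1) = 0`, evaluating at `a` gives
`a = log (exp a - 1)` for the truncated logarithm, so `exp a` determines `a`.
-/

open Polynomial
open scoped Nat

theorem Polynomial.X_pow_succ_dvd_of_X_pow_dvd_derivative {R : Type*} [CommRing R]
    [NoZeroDivisors R] [CharZero R] {p : R[X]} {k : ℕ} (h0 : p.coeff 0 = 0)
    (hd : X ^ k ∣ derivative p) : X ^ (k + 1) ∣ p := by
  rw [X_pow_dvd_iff] at hd ⊢
  rintro (_ | j) hj
  · exact h0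
  · have := hd j (by omega)
    rw [coeff_derivative] at this
    exact (mul_eq_zero.mp this).resolve_right (Nat.cast_add_one_ne_zero j)

theorem derivative_trunc_exp (m : ℕ) :
    derivative (PowerSeries.trunc (m + 1) (PowerSeries.exp ℚ)) =
      PowerSeries.trunc m (PowerSeries.exp ℚ) := by
  rw [← PowerSeries.trunc_derivative, PowerSeries.derivative_exp]

theorem one_add_X_mul_derivative_trunc_log (d : ℕ) :
    (1 + X) * derivative (PowerSeries.trunc (d + 1) (PowerSeries.log ℚ)) = 1 - (-X) ^ d := by
  rw [← PowerSeries.trunc_derivative, PowerSeries.deriv_log]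
  induction d with
  | zero => simp
  | succ d ih =>
    rw [PowerSeries.trunc_succ, mul_add, ih, PowerSeries.coeff_mk, ← C_mul_X_pow_eq_monomial]
    simp only [Algebra.algebraMap_self, RingHom.id_apply, C_pow, C_neg, C_1]
    ring

theorem X_dvd_trunc_exp_sub_one (m : ℕ) :
    X ∣ PowerSeries.trunc (m + 1) (PowerSeries.exp ℚ) - 1 := by
  simp [X_dvd_iff, PowerSeries.coeff_trunc]

theorem X_pow_dvd_trunc_log_comp_trunc_exp_sub_X (s : ℕ) :
    X ^ (s + 1) ∣ (PowerSeries.trunc (s + 1) (PowerSeries.log ℚ)).comp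
      (PowerSeries.trunc (s + 1) (PowerSeries.exp ℚ) - 1) - X := by
  set u := PowerSeries.trunc (s + 1) (PowerSeries.exp ℚ) - 1
  set L := PowerSeries.trunc (s + 1) (PowerSeries.log ℚ)
  have hu : X ∣ u := X_dvd_trunc_exp_sub_one s
  apply X_pow_succ_dvd_of_X_pow_dvd_derivative
  · have hu0 : u.eval 0 = 0 := by rw [← coeff_zero_eq_eval_zero]; exact X_dvd_iff.mp hu
    rw [coeff_sub, coeff_X_zero, sub_zero, coeff_zero_eq_eval_zero, eval_comp, hu0,
      ← coeff_zero_eq_eval_zero, PowerSeries.coeff_trunc]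
    simp
  · have hL : (1 + u) * (derivative L).comp u = 1 - (-u) ^ s := by
      simpa using congrArg (·.comp u) (one_add_X_mul_derivative_trunc_log s)
    have hu' : derivative u = 1 + u - C (s ! : ℚ)⁻¹ * X ^ s := by
      rw [derivative_sub, derivative_one, sub_zero, derivative_trunc_exp]
      simp [u, PowerSeries.trunc_succ, PowerSeries.coeff_exp, ← C_mul_X_pow_eq_monomial]
    have hderiv : derivative (L.comp u - X) =
        -(-u) ^ s - C (s ! : ℚ)⁻¹ * X ^ s * (derivative L).comp u := by
      rw [derivative_sub, derivative_comp, derivative_X, hu']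
      linear_combination hL
    rw [hderiv]
    exact dvd_sub (pow_dvd_pow_of_dvd (dvd_neg.mpr hu) s).neg_right
      (dvd_mul_of_dvd_left (dvd_mul_left _ _) _)

section

variable {𝔸 : Type*} [Ring 𝔸] [Algebra ℚ 𝔸] [TopologicalSpace 𝔸]
  [IsTopologicalRing 𝔸]

theorem NormedSpace.exp_eq_aeval_trunc_of_pow_eq_zero {a : 𝔸} {m : ℕ} (ha : a ^ m = 0) :
    NormedSpace.exp a = aeval a (PowerSeries.trunc m (PowerSeries.exp ℚ)) := by
  simp only [NormedSpace.exp_eq_tsum ℚ]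
  rw [tsum_eq_sum (s := Finset.range m), aeval_def, PowerSeries.eval₂_trunc_eq_sum_range]
  · simp [Algebra.smul_def, PowerSeries.coeff_exp]
  · intro j hj
    simp [pow_eq_zero_of_le (by simpa using hj) ha]

theorem aeval_exp_sub_one_trunc_log {a : 𝔸} {s : ℕ} (ha : a ^ (s + 1) = 0) :
    aeval (NormedSpace.exp a - 1) (PowerSeries.trunc (s + 1) (PowerSeries.log ℚ)) = a := by
  obtain ⟨q, hq⟩ := X_pow_dvd_trunc_log_comp_trunc_exp_sub_X s
  have hq_a := congrArg (aeval a) hq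
  rwa [map_sub, aeval_X, map_mul, map_pow, aeval_X, ha, zero_mul, sub_eq_zero, aeval_comp,
    map_sub, map_one, ← NormedSpace.exp_eq_aeval_trunc_of_pow_eq_zero ha] at hq_a

theorem NormedSpace.exp_injOn_isNilpotent :
    Set.InjOn NormedSpace.exp {a : 𝔸 | IsNilpotent a} := by
  rintro a ⟨k, hk⟩ b ⟨l, hl⟩ hab
  have ha : a ^ (k + l + 1) = 0 := pow_eq_zero_of_le (by omega) hk
  have hb : b ^ (k + l + 1) = 0 := pow_eq_zero_of_le (by omega) hl
  rw [← aeval_exp_sub_one_trunc_log ha, ← aeval_exp_sub_one_trunc_log hb, hab]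

end

/-- The matrix exponential is injective on nilpotent matrices. -/
theorem exp_injOn_nilpotent {n : ℕ} (N M : Matrix (Fin n) (Fin n) ℂ)
    (hN : IsNilpotent N) (hM : IsNilpotent M)
    (h : NormedSpace.exp N = NormedSpace.exp M) : N = M :=
  NormedSpace.exp_injOn_isNilpotent hN hM h
end
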